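/- Let μ be a tempered positive Borel measure on ℝⁿ whose support is Ω. Let f : ℝⁿ → ℂ be a measurable rapidly decreasing function, i.e., for every N ∈ ℕ there is a constant C_N with |f(η)| ≤ C_N (1+‖η‖)^{−N} for all η ∈ ℝⁿ. Let ξ₀ ∈ ℝⁿ, ξ₀ ≠ 0, be such that −ξ₀ does not belong to the asymptotic cone AC(Ω). Then there exists a compact neighborhood K of ξ₀ such that for every t ≥ 1 and ξ ∈ K the integral I(ξ,t) = ∫ f(ω + tξ) dμ(ω) is absolutely convergent, and for every N ∈ ℕ one has sup_{ξ ∈ K, t ≥ 1} t^N |I(ξ,t)| < ∞, i.e., I(ξ,t) is rapidly decreasing as t → +∞, uniformly for ξ ∈ K. (Content of the proof of Theorem IV.3, part 1; cf. [D-V lemme 4].) -/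

import Mathlib

open MeasureTheory Pointwise

/-- A positive Borel measure `μ` on `ℝⁿ` is *tempered* if `∫ (1+‖ω‖)^{−N₀} dμ(ω) < ∞`
for some natural number `N₀`. -/
def IsTemperedMeasure {n : ℕ} (μ : Measure (EuclideanSpace ℝ (Fin n))) : Prop :=
  ∃ N₀ : ℕ, ∫⁻ ω, ENNReal.ofReal ((1 + ‖ω‖) ^ (-(N₀ : ℝ))) ∂μ < ⊤

/-- The (topological) support of a measure: the set of points all of whose neighbourhoods
have positive measure. -/
def measureSupport {n : ℕ} (μ : Measure (EuclideanSpace ℝ (Fin n))) :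
    Set (EuclideanSpace ℝ (Fin n)) :=
  {x | ∀ U ∈ nhds x, μ U ≠ 0}

/-- A *conic neighbourhood* of `ξ` is an open set containing `ξ` that is stable under
multiplication by positive scalars. -/
def IsConicNbhd {n : ℕ} (ξ : EuclideanSpace ℝ (Fin n))
    (C : Set (EuclideanSpace ℝ (Fin n))) : Prop :=
  IsOpen C ∧ ξ ∈ C ∧ ∀ t : ℝ, 0 < t → t • C = C

/-- The *asymptotic cone* of a subset `Ω` of `ℝⁿ`. -/
def asympCone {n : ℕ} (Ω : Set (EuclideanSpace ℝ (Fin n))) :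
    Set (EuclideanSpace ℝ (Fin n)) :=
  {ξ | ∀ C, IsConicNbhd ξ C → ¬ Bornology.IsBounded (Ω ∩ C)}

/-! Since `-ξ₀ ∉ AC(Ω)`, some open cone `C` around `-ξ₀` meets `Ω` in a bounded set. For `ξ`
near `ξ₀`, points of `Ω` outside `C` stay at distance `≳ t` from `-tξ`, and points inside `C` are
bounded, so `1 + ‖ω + tξ‖ ≳ t + ‖ω‖` on `Ω`. Hence `t ^ N |f(ω + tξ)| ≲ (1 + ‖ω‖) ^ (-N₀)`
`μ`-almost everywhere, and the right-hand side is `μ`-integrable because `μ` is tempered. -/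

lemma rpow_mul_rpow_neg_add_le {c t s u p q : ℝ} (hc : 0 < c) (ht : 1 ≤ t) (hs : 0 ≤ s)
    (hp : 0 ≤ p) (hq : 0 ≤ q) (h : c * (t + s) ≤ u) :
    t ^ p * u ^ (-(p + q)) ≤ c ^ (-(p + q)) * (1 + s) ^ (-q) := by
  have ht₀ : 0 < t := one_pos.trans_le ht
  have hts : 0 < t + s := by positivity
  calc t ^ p * u ^ (-(p + q)) ≤ t ^ p * (c * (t + s)) ^ (-(p + q)) := by
        have := Real.rpow_le_rpow_of_nonpos (by positivity) h (by linarith : -(p + q) ≤ 0)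
        gcongr
    _ = c ^ (-(p + q)) * (t ^ p * (t + s) ^ (-p) * (t + s) ^ (-q)) := by
        rw [Real.mul_rpow hc.le hts.le, neg_add, Real.rpow_add hts]; ring
    _ ≤ c ^ (-(p + q)) * (t ^ p * t ^ (-p) * (1 + s) ^ (-q)) := by
        have hp' := Real.rpow_le_rpow_of_nonpos ht₀ (by linarith : t ≤ t + s) (by linarith : -p ≤ 0)
        have hq' := Real.rpow_le_rpow_of_nonpos (by positivity) (by linarith : 1 + s ≤ t + s)
          (by linarith : -q ≤ 0)
        gcongr
    _ = c ^ (-(p + q)) * (1 + s) ^ (-q) := by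
        rw [← Real.rpow_add ht₀, add_neg_cancel, Real.rpow_zero, one_mul]

lemma pow_mul_le_of_le_mul_rpow_neg {a C c t s u : ℝ} {N N₀ : ℕ}
    (ha : a ≤ C * u ^ (-((N + N₀ : ℕ) : ℝ))) (hc : 0 < c) (ht : 1 ≤ t) (hs : 0 ≤ s)
    (h : c * (t + s) ≤ u) :
    t ^ N * a ≤ max C 0 * c ^ (-((N : ℝ) + N₀)) * (1 + s) ^ (-(N₀ : ℝ)) := by
  calc t ^ N * a ≤ t ^ N * (max C 0 * u ^ (-((N : ℝ) + N₀))) := by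
        push_cast at ha
        have hu : 0 ≤ u := (by positivity : 0 ≤ c * (t + s)).trans h
        gcongr
        exact ha.trans (mul_le_mul_of_nonneg_right (le_max_left C 0) (Real.rpow_nonneg hu _))
    _ = max C 0 * (t ^ (N : ℝ) * u ^ (-((N : ℝ) + N₀))) := by
        rw [Real.rpow_natCast]; ring
    _ ≤ max C 0 * c ^ (-((N : ℝ) + N₀)) * (1 + s) ^ (-(N₀ : ℝ)) := by
        rw [mul_assoc]
        exact mul_le_mul_of_nonneg_left
          (rpow_mul_rpow_neg_add_le hc ht hs N.cast_nonneg N₀.cast_nonneg h) (le_max_right C 0)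

lemma mul_norm_integral_le_of_ae_mul_norm_le {α E : Type*} [MeasurableSpace α]
    [NormedAddCommGroup E] [NormedSpace ℝ E] {μ : Measure α} {F : α → E} {g : α → ℝ}
    {a D : ℝ} (ha : 0 ≤ a) (hF : Integrable F μ) (hg : Integrable g μ)
    (h : ∀ᵐ x ∂μ, a * ‖F x‖ ≤ D * g x) :
    a * ‖∫ x, F x ∂μ‖ ≤ D * ∫ x, g x ∂μ :=
  calc a * ‖∫ x, F x ∂μ‖ ≤ ∫ x, a * ‖F x‖ ∂μ := by
        rw [integral_const_mul]; gcongr; exact norm_integral_le_integral_norm _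
    _ ≤ ∫ x, D * g x ∂μ := integral_mono_ae (hF.norm.const_mul a) (hg.const_mul D) h
    _ = D * ∫ x, g x ∂μ := integral_const_mul _ _

section NormedSpace

variable {E : Type*} [NormedAddCommGroup E] [NormedSpace ℝ E]

lemma mul_le_norm_sub_smul_of_notMem {C : Set E} (hC : ∀ t : ℝ, 0 < t → t • C = C)
    {θ : E} {ε : ℝ} (hball : Metric.ball θ ε ⊆ C) {t : ℝ} (ht : 0 < t) {ω : E}
    (hω : ω ∉ C) : t * ε ≤ ‖ω - t • θ‖ := by
  by_contra! hlt
  refine hω (hC t ht ▸ ⟨t⁻¹ • ω, hball ?_, smul_inv_smul₀ ht.ne' ω⟩)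
  have : t⁻¹ • ω - θ = t⁻¹ • (ω - t • θ) := by
    rw [smul_sub, inv_smul_smul₀ ht.ne']
  rw [Metric.mem_ball, dist_eq_norm, this, norm_smul, Real.norm_of_nonneg (inv_nonneg.2 ht.le),
    inv_mul_lt_iff₀ ht]
  linarith

lemma add_norm_le_mul_one_add_norm_add_smul {ρ M R t : ℝ} {ω ξ : E} (hρ : 0 < ρ)
    (hM : 0 ≤ M) (ht : 0 ≤ t) (hξ : ‖ξ‖ ≤ R) (h : t * ρ ≤ ‖ω + t • ξ‖ + M) :
    ρ * (t + ‖ω‖) ≤ ((1 + R) * (1 + M) + ρ) * (1 + ‖ω + t • ξ‖) := by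
  have hω : ‖ω‖ ≤ ‖ω + t • ξ‖ + t * R := by
    calc ‖ω‖ = ‖ω + t • ξ - t • ξ‖ := by rw [add_sub_cancel_right]
      _ ≤ ‖ω + t • ξ‖ + ‖t • ξ‖ := norm_sub_le _ _
      _ ≤ ‖ω + t • ξ‖ + t * R := by
        rw [norm_smul, Real.norm_of_nonneg ht]; gcongr
  have hR : 0 ≤ R := (norm_nonneg ξ).trans hξ
  nlinarith [norm_nonneg (ω + t • ξ), mul_le_mul_of_nonneg_left hω hρ.le,
    mul_le_mul_of_nonneg_left h hR, mul_nonneg hR hM, mul_nonneg hR (norm_nonneg (ω + t • ξ)),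
    mul_nonneg hM (norm_nonneg (ω + t • ξ))]

end NormedSpace

lemma measureSupport_eq_support {n : ℕ} (μ : Measure (EuclideanSpace ℝ (Fin n))) :
    measureSupport μ = μ.support := by
  ext x
  simp [measureSupport, Measure.mem_support_iff_forall, pos_iff_ne_zero]

lemma IsTemperedMeasure.exists_integrable {n : ℕ} {μ : Measure (EuclideanSpace ℝ (Fin n))}
    (hμ : IsTemperedMeasure μ) :
    ∃ N₀ : ℕ, Integrable (fun ω => (1 + ‖ω‖) ^ (-(N₀ : ℝ))) μ := by
  obtain ⟨N₀, hN₀⟩ := hμ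
  have hmeas : Measurable fun ω : EuclideanSpace ℝ (Fin n) => (1 + ‖ω‖) ^ (-(N₀ : ℝ)) := by
    fun_prop
  refine ⟨N₀, hmeas.aestronglyMeasurable, ?_⟩
  have henorm (ω : EuclideanSpace ℝ (Fin n)) :
      ‖(1 + ‖ω‖) ^ (-(N₀ : ℝ))‖ₑ = ENNReal.ofReal ((1 + ‖ω‖) ^ (-(N₀ : ℝ))) :=
    Real.enorm_eq_ofReal (Real.rpow_nonneg (by positivity) _)
  simpa only [HasFiniteIntegral, henorm] using hN₀

lemma exists_mul_le_norm_add_smul_add_of_neg_notMem_asympCone {n : ℕ}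
    {Ω : Set (EuclideanSpace ℝ (Fin n))} {ξ₀ : EuclideanSpace ℝ (Fin n)} (hξ₀ : ξ₀ ≠ 0)
    (h : -ξ₀ ∉ asympCone Ω) :
    ∃ ρ > 0, ∃ M ≥ 0, ∀ ξ ∈ Metric.closedBall ξ₀ ρ, ∀ t : ℝ, 0 < t → ∀ ω ∈ Ω,
      t * ρ ≤ ‖ω + t • ξ‖ + M := by
  simp only [asympCone, Set.mem_ofPred_eq, not_forall, not_not] at h
  obtain ⟨C, ⟨hCopen, hCmem, hCcone⟩, hbdd⟩ := h
  obtain ⟨ε, hε, hball⟩ := Metric.isOpen_iff.1 hCopen _ hCmem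
  obtain ⟨M, hM⟩ := hbdd.exists_norm_le
  have hξ₀ : 0 < ‖ξ₀‖ := norm_pos_iff.2 hξ₀
  set ρ := min ε ‖ξ₀‖ / 2 with hρ
  have hρε : 2 * ρ ≤ ε := by linarith [min_le_left ε ‖ξ₀‖]
  have hρξ₀ : 2 * ρ ≤ ‖ξ₀‖ := by linarith [min_le_right ε ‖ξ₀‖]
  refine ⟨ρ, by positivity, max M 0, le_max_right _ _, fun ξ hξ t ht ω hω => ?_⟩
  have hshift : ‖ω + t • ξ₀‖ ≤ ‖ω + t • ξ‖ + t * ρ := by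
    calc ‖ω + t • ξ₀‖ = ‖(ω + t • ξ) - t • (ξ - ξ₀)‖ := by rw [smul_sub]; abel_nf
      _ ≤ ‖ω + t • ξ‖ + t * ‖ξ - ξ₀‖ := by
        refine (norm_sub_le _ _).trans_eq ?_
        rw [norm_smul, Real.norm_of_nonneg ht.le]
      _ ≤ ‖ω + t • ξ‖ + t * ρ := by gcongr; exact mem_closedBall_iff_norm.1 hξ
  have hfar : t * (2 * ρ) ≤ ‖ω + t • ξ₀‖ + max M 0 := by
    by_cases hωC : ω ∈ C
    · have hωM : ‖ω‖ ≤ max M 0 := (hM ω ⟨hω, hωC⟩).trans (le_max_left _ _)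
      calc t * (2 * ρ) ≤ ‖t • ξ₀‖ := by
            rw [norm_smul, Real.norm_of_nonneg ht.le]; gcongr
        _ = ‖(ω + t • ξ₀) - ω‖ := by rw [add_sub_cancel_left]
        _ ≤ ‖ω + t • ξ₀‖ + max M 0 := (norm_sub_le _ _).trans (by gcongr)
    · have := mul_le_norm_sub_smul_of_notMem hCcone hball ht hωC
      rw [smul_neg, sub_neg_eq_add] at this
      nlinarith [le_max_right M 0]
  linarith

lemma exists_mul_add_norm_le_of_neg_notMem_asympCone {n : ℕ}
    {Ω : Set (EuclideanSpace ℝ (Fin n))} {ξ₀ : EuclideanSpace ℝ (Fin n)} (hξ₀ : ξ₀ ≠ 0)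
    (h : -ξ₀ ∉ asympCone Ω) :
    ∃ ρ > 0, ∃ c > 0, ∀ ξ ∈ Metric.closedBall ξ₀ ρ, ∀ t : ℝ, 0 < t → ∀ ω ∈ Ω,
      c * (t + ‖ω‖) ≤ 1 + ‖ω + t • ξ‖ := by
  obtain ⟨ρ, hρ, M, hM, hfar⟩ :=
    exists_mul_le_norm_add_smul_add_of_neg_notMem_asympCone hξ₀ h
  set A := (1 + (‖ξ₀‖ + ρ)) * (1 + M) + ρ
  refine ⟨ρ, hρ, ρ / A, by positivity, fun ξ hξ t ht ω hω => ?_⟩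
  have hξR : ‖ξ‖ ≤ ‖ξ₀‖ + ρ :=
    (norm_le_norm_add_norm_sub' ξ ξ₀).trans (by gcongr; exact mem_closedBall_iff_norm.1 hξ)
  rw [div_mul_eq_mul_div, div_le_iff₀ (by positivity), mul_comm _ A]
  exact add_norm_le_mul_one_add_norm_add_smul hρ hM ht.le hξR (hfar ξ hξ t ht ω hω)

/-- If `μ` is a tempered measure on `ℝⁿ` with support `Ω`, `f` is measurable and rapidly
decreasing, and `−ξ₀ ∉ AC(Ω)` with `ξ₀ ≠ 0`, then there is a compact neighbourhood `K` of
`ξ₀` such that `I(ξ,t) = ∫ f(ω + tξ) dμ(ω)` converges absolutely for `ξ ∈ K`, `t ≥ 1`, and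
is rapidly decreasing as `t → +∞`, uniformly in `ξ ∈ K`. -/
theorem integral_rapid_decay_of_not_mem_asympCone {n : ℕ}
    (μ : Measure (EuclideanSpace ℝ (Fin n))) (htemp : IsTemperedMeasure μ)
    (Ω : Set (EuclideanSpace ℝ (Fin n))) (hΩ : measureSupport μ = Ω)
    (f : EuclideanSpace ℝ (Fin n) → ℂ) (hfmeas : Measurable f)
    (hdecay : ∀ N : ℕ, ∃ C : ℝ, ∀ η, ‖f η‖ ≤ C * (1 + ‖η‖) ^ (-(N : ℝ)))
    (ξ₀ : EuclideanSpace ℝ (Fin n)) (hξ₀ : ξ₀ ≠ 0) (h : -ξ₀ ∉ asympCone Ω) :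
    ∃ K : Set (EuclideanSpace ℝ (Fin n)), IsCompact K ∧ K ∈ nhds ξ₀ ∧
      (∀ ξ ∈ K, ∀ t : ℝ, 1 ≤ t → Integrable (fun ω => f (ω + t • ξ)) μ) ∧
      ∀ N : ℕ, ∃ C : ℝ, ∀ ξ ∈ K, ∀ t : ℝ, 1 ≤ t →
        t ^ N * ‖∫ ω, f (ω + t • ξ) ∂μ‖ ≤ C := by
  obtain ⟨N₀, hweight⟩ := htemp.exists_integrable
  obtain ⟨ρ, hρ, c, hc, hlower⟩ := exists_mul_add_norm_le_of_neg_notMem_asympCone hξ₀ h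
  have hΩae : ∀ᵐ ω ∂μ, ω ∈ Ω := hΩ ▸ measureSupport_eq_support μ ▸ Measure.support_mem_ae
  have hpointwise (N : ℕ) : ∃ D, ∀ ξ ∈ Metric.closedBall ξ₀ ρ, ∀ t : ℝ, 1 ≤ t →
      ∀ᵐ ω ∂μ, t ^ N * ‖f (ω + t • ξ)‖ ≤ D * (1 + ‖ω‖) ^ (-(N₀ : ℝ)) := by
    obtain ⟨C, hC⟩ := hdecay (N + N₀)
    exact ⟨_, fun ξ hξ t ht => hΩae.mono fun ω hω => pow_mul_le_of_le_mul_rpow_neg (hC _) hc ht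
      (norm_nonneg ω) (hlower ξ hξ t (by linarith) ω hω)⟩
  have hint : ∀ ξ ∈ Metric.closedBall ξ₀ ρ, ∀ t : ℝ, 1 ≤ t →
      Integrable (fun ω => f (ω + t • ξ)) μ := by
    obtain ⟨D, hD⟩ := hpointwise 0
    intro ξ hξ t ht
    refine (hweight.const_mul D).mono'
      (hfmeas.comp (measurable_add_const _)).aestronglyMeasurable ?_
    simpa using hD ξ hξ t ht
  refine ⟨_, isCompact_closedBall ξ₀ ρ, Metric.closedBall_mem_nhds ξ₀ hρ, hint, fun N => ?_⟩
  obtain ⟨D, hD⟩ := hpointwise N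
  refine ⟨D * ∫ ω, (1 + ‖ω‖) ^ (-(N₀ : ℝ)) ∂μ, fun ξ hξ t ht => ?_⟩
  exact mul_norm_integral_le_of_ae_mul_norm_le (by positivity) (hint ξ hξ t ht) hweight
    (hD ξ hξ t ht)
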